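/- Let B(u,v,l) := u − 1/(v(1+l)), defined on the domain 𝒟 := {(u,v,l) ∈ ℝ³ : u ≥ 0, v ≥ 0, 0 ≤ l ≤ 1, uv ≥ 1}. Then 0 ≤ B(u,v,l) ≤ u on 𝒟, and B satisfies the following convexity property: for all x, x₊, x₋ ∈ 𝒟 with x − (x₊ + x₋)/2 = (0, 0, α) for some α ≥ 0, writing x = (u,v,l), one has B(x) − (B(x₊) + B(x₋))/2 ≥ α/(4v). -/
import Mathlib

noncomputable section

/-- The Bellman function `B(u,v,l) = u − 1/(v(1+l))`. -/
def bellman3 (u v l : ℝ) : ℝ := u - (v * (1 + l))⁻¹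

/-- The domain `𝒟 = {(u,v,l) : u ≥ 0, v ≥ 0, 0 ≤ l ≤ 1, uv ≥ 1}`. -/
def memD3 (u v l : ℝ) : Prop := 0 ≤ u ∧ 0 ≤ v ∧ 0 ≤ l ∧ l ≤ 1 ∧ 1 ≤ u * v

lemma vpos {u v l : ℝ} (h : memD3 u v l) : 0 < v := by
  obtain ⟨hu, hv, _, _, huv⟩ := h
  rcases hv.lt_or_eq with h | h
  · exact h
  · nlinarith

lemma conv_key {vp lp vm lm : ℝ} (hvp : 0 < vp) (hvm : 0 < vm)
    (hlp0 : 0 ≤ lp) (hlp1 : lp ≤ 1) (hlm0 : 0 ≤ lm) (hlm1 : lm ≤ 1) :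
    ((vp + vm) / 2 * (1 + (lp + lm) / 2))⁻¹ ≤
      ((vp * (1 + lp))⁻¹ + (vm * (1 + lm))⁻¹) / 2 := by
  have ha : (0:ℝ) < vp * (1 + lp) := by nlinarith
  have hb : (0:ℝ) < vm * (1 + lm) := by nlinarith
  have hc : (0:ℝ) < (vp + vm) / 2 * (1 + (lp + lm) / 2) := by nlinarith
  rw [inv_eq_one_div, inv_eq_one_div, inv_eq_one_div, div_add_div _ _ (ne_of_gt ha) (ne_of_gt hb),
    div_div, div_le_div_iff₀ hc (by positivity)]
  have h1 : (0:ℝ) < (2 + lp + lm)^2 - (lp - lm)^2 := by nlinarith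
  have hF : (0:ℝ) ≤ (vp - vm)^2 * ((2 + lp + lm)^2 - (lp - lm)^2)
      + (vp + vm) * (2 + lp + lm) * (vp - vm) * (lp - lm)
      + (vp + vm)^2 * (lp - lm)^2 := by
    nlinarith [h1, sq_nonneg (2*((2 + lp + lm)^2 - (lp - lm)^2)*(vp - vm)
        + (vp + vm)*(2 + lp + lm)*(lp - lm)),
      mul_nonneg (by nlinarith : (0:ℝ) ≤ 3*(2 + lp + lm)^2 - 4*(lp - lm)^2)
        (sq_nonneg ((vp + vm)*(lp - lm)))]
  nlinarith [hF]

/-- The Bellman function `B(u,v,l) = u − 1/(v(1+l))` satisfies `0 ≤ B ≤ u` on `𝒟` and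
the convexity property: if `x, x₊, x₋ ∈ 𝒟` and `x − (x₊ + x₋)/2 = (0,0,α)` with `α ≥ 0`,
then `B(x) − (B(x₊) + B(x₋))/2 ≥ α/(4v)`. -/
theorem bellman3_properties :
    (∀ u v l : ℝ, memD3 u v l → 0 ≤ bellman3 u v l ∧ bellman3 u v l ≤ u) ∧
    (∀ u v l up vp lp um vm lm α : ℝ,
      memD3 u v l → memD3 up vp lp → memD3 um vm lm → 0 ≤ α →
      u - (up + um) / 2 = 0 → v - (vp + vm) / 2 = 0 → l - (lp + lm) / 2 = α →
      bellman3 u v l - (bellman3 up vp lp + bellman3 um vm lm) / 2 ≥ α / (4 * v)) := by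
  constructor
  · intro u v l h
    have hv := vpos h
    obtain ⟨hu, _, hl0, hl1, huv⟩ := h
    have hvl : (0:ℝ) < v * (1 + l) := by nlinarith
    constructor
    · have : (v * (1 + l))⁻¹ ≤ u := by
        rw [inv_eq_one_div, div_le_iff₀ hvl]; nlinarith
      simpa [bellman3] using this
    · have : (0:ℝ) ≤ (v * (1 + l))⁻¹ := inv_nonneg.mpr hvl.le
      simp only [bellman3]; linarith
  · intro u v l up vp lp um vm lm α hx hp hm hα hu hv hl
    have hvpos := vpos hx
    have hvp := vpos hp
    have hvm := vpos hm
    obtain ⟨_, _, hl0, hl1, _⟩ := hx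
    obtain ⟨_, _, hlp0, hlp1, _⟩ := hp
    obtain ⟨_, _, hlm0, hlm1, _⟩ := hm
    have hveq : v = (vp + vm) / 2 := by linarith
    have hueq : u = (up + um) / 2 := by linarith
    set m := (lp + lm) / 2 with hm'
    have hleq : l = m + α := by rw [hm']; linarith
    have hm0 : 0 ≤ m := by rw [hm']; linarith
    have key1 : ((vp + vm) / 2 * (1 + m))⁻¹ ≤
        ((vp * (1 + lp))⁻¹ + (vm * (1 + lm))⁻¹) / 2 :=
      conv_key hvp hvm hlp0 hlp1 hlm0 hlm1
    have key2 : α / (4 * v) ≤ (v * (1 + m))⁻¹ - (v * (1 + l))⁻¹ := by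
      have h1m : (0:ℝ) < v * (1 + m) := by nlinarith
      have h1l : (0:ℝ) < v * (1 + l) := by nlinarith
      have heq : (v * (1 + m))⁻¹ - (v * (1 + l))⁻¹ = α / (v * (1 + m) * (1 + l)) := by
        rw [hleq]; field_simp; ring
      rw [heq]
      apply div_le_div_of_nonneg_left hα (by nlinarith)
      nlinarith
    have hB : bellman3 u v l - (bellman3 up vp lp + bellman3 um vm lm) / 2 =
        -(v * (1 + l))⁻¹ + ((vp * (1 + lp))⁻¹ + (vm * (1 + lm))⁻¹) / 2 := by
      simp only [bellman3]; rw [hueq]; ring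
    rw [ge_iff_le, hB]
    rw [← hveq] at key1
    linarith
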